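/- arXiv:2105.04336 — 3 statements merged into one kernel-verified Lean document; each statement's English description precedes it below -/
import Mathlib

section
/- Let C be a convex cone of N×N Hermitian matrices. Then I_Anti ⊆ C if and only if V_Anti ⊆ C. -/
open Matrix

/-- The permutation matrix `P_π` on the `m`-fold tensor power of `ℂ^n`, indexing
coordinates by functions `f : Fin m → Fin n`, with entries
`(P_π)_{f,g} = 1` if `g = f ∘ π⁻¹` and `0` otherwise. -/
def permMat (n m : ℕ) (π : Equiv.Perm (Fin m)) :
    Matrix (Fin m → Fin n) (Fin m → Fin n) ℂ :=
  Matrix.of fun f g => if g = f ∘ π.symm then 1 else 0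

/-- The antisymmetriser `Π_Anti = (1/m!) Σ_π sign(π) • P_π`. -/
noncomputable def antisymmetriser (n m : ℕ) :
    Matrix (Fin m → Fin n) (Fin m → Fin n) ℂ :=
  (m.factorial : ℂ)⁻¹ •
    ∑ π : Equiv.Perm (Fin m), ((Equiv.Perm.sign π : ℤ) : ℂ) • permMat n m π

/-- The antisymmetrically permuted matrix
`A_{l,r}(G) = sign(π_l)·sign(π_r)·(1/2)(P_l† G P_r + P_r† G P_l)`. -/
noncomputable def antiPerm (n m : ℕ) (πl πr : Equiv.Perm (Fin m))
    (G : Matrix (Fin m → Fin n) (Fin m → Fin n) ℂ) :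
    Matrix (Fin m → Fin n) (Fin m → Fin n) ℂ :=
  (((Equiv.Perm.sign πl : ℤ) : ℂ) * ((Equiv.Perm.sign πr : ℤ) : ℂ)) •
    ((2 : ℂ)⁻¹ •
      ((permMat n m πl)ᴴ * G * permMat n m πr + (permMat n m πr)ᴴ * G * permMat n m πl))

noncomputable def sC {m : ℕ} (π : Equiv.Perm (Fin m)) : ℂ := ((Equiv.Perm.sign π : ℤ) : ℂ)

lemma sC_mul_self {m : ℕ} (π : Equiv.Perm (Fin m)) : sC π * sC π = 1 := by
  simp only [sC, ← Int.cast_mul, ← Units.val_mul, Int.units_mul_self]; simp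

lemma star_sC {m : ℕ} (π : Equiv.Perm (Fin m)) : star (sC π) = sC π := by simp [sC]

lemma sC_inv {m : ℕ} (π : Equiv.Perm (Fin m)) : sC π⁻¹ = sC π := by simp [sC]

lemma sC_mul {m : ℕ} (σ τ : Equiv.Perm (Fin m)) : sC (σ * τ) = sC σ * sC τ := by
  simp only [sC, _root_.map_mul, Units.val_mul, Int.cast_mul]

noncomputable def TMat (n m : ℕ) : Matrix (Fin m → Fin n) (Fin m → Fin n) ℂ :=
  ∑ π : Equiv.Perm (Fin m), sC π • permMat n m π

lemma antisymmetriser_eq (n m : ℕ) :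
    antisymmetriser n m = (m.factorial : ℂ)⁻¹ • TMat n m := rfl

lemma TMat_eq (n m : ℕ) : TMat n m = (m.factorial : ℂ) • antisymmetriser n m := by
  rw [antisymmetriser_eq, smul_smul, mul_inv_cancel₀, one_smul]
  exact_mod_cast Nat.cast_ne_zero.mpr (Nat.factorial_ne_zero m)

lemma permMat_conjTranspose (n m : ℕ) (π : Equiv.Perm (Fin m)) :
    (permMat n m π)ᴴ = permMat n m π⁻¹ := by
  ext f g
  simp only [conjTranspose_apply, permMat, of_apply]
  have h : (f = g ∘ ⇑π.symm) ↔ (g = f ∘ ⇑(π⁻¹).symm) := by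
    constructor <;> rintro rfl <;> funext x <;> simp [Equiv.Perm.inv_def]
  rw [if_congr h rfl rfl]
  split <;> simp

lemma permMat_mul (n m : ℕ) (σ τ : Equiv.Perm (Fin m)) :
    permMat n m σ * permMat n m τ = permMat n m (τ * σ) := by
  ext f g
  simp only [mul_apply, permMat, of_apply, ite_mul, one_mul, zero_mul]
  rw [Finset.sum_ite_eq' Finset.univ (f ∘ ⇑σ.symm) (fun x => if g = x ∘ ⇑τ.symm then (1:ℂ) else 0)]
  simp only [Finset.mem_univ, if_true]
  have h : (g = (f ∘ ⇑σ.symm) ∘ ⇑τ.symm) ↔ (g = f ∘ ⇑(τ * σ).symm) := by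
    constructor <;> rintro rfl <;> funext x <;> simp [Equiv.Perm.mul_def, Function.comp]
  rw [if_congr h rfl rfl]

lemma TMat_conjTranspose (n m : ℕ) : (TMat n m)ᴴ = TMat n m := by
  rw [TMat, conjTranspose_sum]
  simp only [conjTranspose_smul, star_sC, permMat_conjTranspose]
  exact Fintype.sum_equiv (Equiv.inv _) _ _ (fun π => by simp [sC_inv])

lemma TMat_mul_permMat (n m : ℕ) (π : Equiv.Perm (Fin m)) :
    TMat n m * permMat n m π = sC π • TMat n m := by
  rw [TMat, Finset.sum_mul, Finset.smul_sum]
  refine Fintype.sum_equiv (Equiv.mulLeft π) _ _ (fun σ => ?_)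
  simp only [Equiv.coe_mulLeft, smul_mul_assoc, permMat_mul, smul_smul, sC_mul]
  rw [← mul_assoc, sC_mul_self, one_mul]

lemma permMat_mul_TMat (n m : ℕ) (π : Equiv.Perm (Fin m)) :
    permMat n m π * TMat n m = sC π • TMat n m := by
  rw [TMat, Finset.mul_sum, Finset.smul_sum]
  refine Fintype.sum_equiv (Equiv.mulRight π) _ _ (fun σ => ?_)
  simp only [Equiv.coe_mulRight, mul_smul_comm, permMat_mul, smul_smul, sC_mul]
  rw [mul_comm (sC σ) (sC π), ← mul_assoc, sC_mul_self, one_mul]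

lemma antiPerm_def (n m : ℕ) (πl πr : Equiv.Perm (Fin m)) (G) :
    antiPerm n m πl πr G = (sC πl * sC πr) •
    ((2 : ℂ)⁻¹ •
      ((permMat n m πl)ᴴ * G * permMat n m πr + (permMat n m πr)ᴴ * G * permMat n m πl)) := rfl

lemma anti_conjTranspose (n m : ℕ) : (antisymmetriser n m)ᴴ = antisymmetriser n m := by
  rw [antisymmetriser_eq, conjTranspose_smul, TMat_conjTranspose]
  congr 1
  simp

lemma anti_mul_permMat (n m : ℕ) (π : Equiv.Perm (Fin m)) :
    antisymmetriser n m * permMat n m π = sC π • antisymmetriser n m := by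
  rw [antisymmetriser_eq, smul_mul_assoc, TMat_mul_permMat, smul_comm]

lemma permMat_mul_anti (n m : ℕ) (π : Equiv.Perm (Fin m)) :
    permMat n m π * antisymmetriser n m = sC π • antisymmetriser n m := by
  rw [antisymmetriser_eq, mul_smul_comm, permMat_mul_TMat, smul_comm]

lemma anti_mul_permMat_conjTranspose (n m : ℕ) (π : Equiv.Perm (Fin m)) :
    antisymmetriser n m * (permMat n m π)ᴴ = sC π • antisymmetriser n m := by
  rw [permMat_conjTranspose, anti_mul_permMat, sC_inv]

lemma anti_conj_term (n m : ℕ) (l r : Equiv.Perm (Fin m)) (G) :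
    antisymmetriser n m * ((permMat n m l)ᴴ * G * permMat n m r) * antisymmetriser n m
      = (sC l * sC r) • (antisymmetriser n m * G * antisymmetriser n m) := by
  have h : antisymmetriser n m * ((permMat n m l)ᴴ * G * permMat n m r) * antisymmetriser n m
      = (antisymmetriser n m * (permMat n m l)ᴴ) * G * (permMat n m r * antisymmetriser n m) := by
    noncomm_ring
  rw [h, anti_mul_permMat_conjTranspose, permMat_mul_anti, smul_mul_assoc, smul_mul_assoc,
    mul_smul_comm, smul_smul]

lemma anti_antiPerm_anti (n m : ℕ) (l r : Equiv.Perm (Fin m)) (G) :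
    antisymmetriser n m * antiPerm n m l r G * antisymmetriser n m
      = antisymmetriser n m * G * antisymmetriser n m := by
  rw [antiPerm_def, mul_smul_comm, mul_smul_comm, smul_mul_assoc, smul_mul_assoc,
    mul_add, add_mul, anti_conj_term, anti_conj_term]
  rw [smul_smul, ← add_smul, smul_smul]
  have h : sC l * sC r * 2⁻¹ * (sC l * sC r + sC r * sC l) = 1 := by
    linear_combination sC r * sC r * sC_mul_self l + sC_mul_self r
  rw [h, one_smul]

lemma antiPerm_isHermitian {n m : ℕ} (l r : Equiv.Perm (Fin m))
    {G : Matrix (Fin m → Fin n) (Fin m → Fin n) ℂ} (hG : G.IsHermitian) :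
    (antiPerm n m l r G).IsHermitian := by
  have h1 : ∀ a b : Equiv.Perm (Fin m),
      ((permMat n m a)ᴴ * G * permMat n m b)ᴴ = (permMat n m b)ᴴ * G * permMat n m a := by
    intro a b
    rw [conjTranspose_mul, conjTranspose_mul, conjTranspose_conjTranspose, hG.eq, mul_assoc]
  show _ = _
  rw [antiPerm_def, conjTranspose_smul, conjTranspose_smul, conjTranspose_add, h1, h1,
    add_comm]
  congr 1
  · rw [star_mul', star_sC, star_sC]
  congr 1
  · rw [star_inv₀]
    simp

lemma anti_G_anti_isHermitian {n m : ℕ}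
    {G : Matrix (Fin m → Fin n) (Fin m → Fin n) ℂ} (hG : G.IsHermitian) :
    (antisymmetriser n m * G * antisymmetriser n m).IsHermitian := by
  show _ = _
  rw [conjTranspose_mul, conjTranspose_mul, anti_conjTranspose, hG.eq, mul_assoc]

lemma sum_antiPerm (n m : ℕ) (G : Matrix (Fin m → Fin n) (Fin m → Fin n) ℂ) :
    ∑ l : Equiv.Perm (Fin m), ∑ r : Equiv.Perm (Fin m), antiPerm n m l r G
      = TMat n m * G * TMat n m := by
  have hstep : ∑ l : Equiv.Perm (Fin m), ∑ r : Equiv.Perm (Fin m), antiPerm n m l r G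
      = ∑ l : Equiv.Perm (Fin m), ∑ r : Equiv.Perm (Fin m),
          (sC l * sC r) • ((permMat n m l)ᴴ * G * permMat n m r) := by
    have hsplit : ∀ l r : Equiv.Perm (Fin m), antiPerm n m l r G =
        (2:ℂ)⁻¹ • ((sC l * sC r) • ((permMat n m l)ᴴ * G * permMat n m r))
        + (2:ℂ)⁻¹ • ((sC r * sC l) • ((permMat n m r)ᴴ * G * permMat n m l)) := by
      intro l r
      rw [antiPerm_def, smul_add, smul_add, smul_smul, smul_smul, smul_smul, smul_smul]
      congr 2
      · ring
      · ring
    simp only [hsplit, Finset.sum_add_distrib, ← Finset.smul_sum]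
    rw [Finset.sum_comm (f := fun l r => (sC r * sC l) • ((permMat n m r)ᴴ * G * permMat n m l))]
    rw [← smul_add, ← two_smul ℂ, smul_smul]
    rw [inv_mul_cancel₀ (two_ne_zero), one_smul]
  rw [hstep]
  have hT : (∑ l : Equiv.Perm (Fin m), sC l • (permMat n m l)ᴴ) = TMat n m := by
    rw [← TMat_conjTranspose n m, TMat, conjTranspose_sum]
    refine Finset.sum_congr rfl (fun l _ => ?_)
    rw [conjTranspose_smul, star_sC]
  have hexp : ∑ l : Equiv.Perm (Fin m), ∑ r : Equiv.Perm (Fin m),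
      (sC l * sC r) • ((permMat n m l)ᴴ * G * permMat n m r)
      = (∑ l : Equiv.Perm (Fin m), sC l • (permMat n m l)ᴴ) * G *
        (∑ r : Equiv.Perm (Fin m), sC r • permMat n m r) := by
    rw [Finset.sum_mul, Finset.sum_mul]
    refine Finset.sum_congr rfl (fun l _ => ?_)
    rw [Finset.mul_sum]
    refine Finset.sum_congr rfl (fun r _ => ?_)
    rw [smul_mul_assoc, smul_mul_assoc, mul_smul_comm, smul_smul, mul_assoc]
  rw [hexp, hT]
  rfl

lemma sum_sub_antiPerm (n m : ℕ) (G : Matrix (Fin m → Fin n) (Fin m → Fin n) ℂ) :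
    ∑ l : Equiv.Perm (Fin m), ∑ r : Equiv.Perm (Fin m), (G - antiPerm n m l r G)
      = ((m.factorial : ℂ)^2) • (G - antisymmetriser n m * G * antisymmetriser n m) := by
  have hcard : (Fintype.card (Equiv.Perm (Fin m))) = m.factorial := by
    rw [Fintype.card_perm, Fintype.card_fin]
  have h1 : ∑ l : Equiv.Perm (Fin m), ∑ r : Equiv.Perm (Fin m), G
      = ((m.factorial : ℂ)^2) • G := by
    rw [Finset.sum_const, Finset.sum_const, Finset.card_univ, hcard, smul_smul,
      ← Nat.cast_smul_eq_nsmul ℂ, Nat.cast_mul, sq]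
  simp only [Finset.sum_sub_distrib]
  rw [h1, sum_antiPerm, TMat_eq]
  simp only [smul_mul_assoc, mul_smul_comm, smul_smul]
  rw [smul_sub, sq]

/-- `I_Anti`: the set of matrices of the form `G - A_{l,r}(G)` with `G` Hermitian. -/
def IAnti (n m : ℕ) : Set (Matrix (Fin m → Fin n) (Fin m → Fin n) ℂ) :=
  {A | ∃ (G : Matrix (Fin m → Fin n) (Fin m → Fin n) ℂ) (πl πr : Equiv.Perm (Fin m)),
      G.IsHermitian ∧ A = G - antiPerm n m πl πr G}

/-- `V_Anti`: the set of matrices of the form `G - Π_Anti G Π_Anti` with `G` Hermitian. -/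
def VAnti (n m : ℕ) : Set (Matrix (Fin m → Fin n) (Fin m → Fin n) ℂ) :=
  {A | ∃ G : Matrix (Fin m → Fin n) (Fin m → Fin n) ℂ,
      G.IsHermitian ∧ A = G - antisymmetriser n m * G * antisymmetriser n m}

/-- For a convex cone `C` of Hermitian matrices, `I_Anti ⊆ C` iff `V_Anti ⊆ C`. -/
theorem IAnti_subset_iff_VAnti_subset (n m : ℕ) (hn : 1 ≤ n) (hm : 1 ≤ m)
    (C : Set (Matrix (Fin m → Fin n) (Fin m → Fin n) ℂ))
    (hHerm : ∀ A ∈ C, A.IsHermitian)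
    (hAdd : ∀ A ∈ C, ∀ B ∈ C, A + B ∈ C)
    (hSMul : ∀ (c : ℝ), 0 ≤ c → ∀ A ∈ C, (c : ℂ) • A ∈ C)
    : IAnti n m ⊆ C ↔ VAnti n m ⊆ C := by
  have hsum : ∀ {ι : Type} [Fintype ι] [Nonempty ι]
      (f : ι → Matrix (Fin m → Fin n) (Fin m → Fin n) ℂ),
      (∀ i, f i ∈ C) → ∑ i, f i ∈ C := by
    intro ι _ _ f hf
    exact Finset.sum_induction_nonempty f (· ∈ C) (fun a b ha hb => hAdd a ha b hb)
      Finset.univ_nonempty (fun x _ => hf x)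
  constructor
  · intro hI A hA
    obtain ⟨G, hG, rfl⟩ := hA
    have hmem : ∑ l : Equiv.Perm (Fin m), ∑ r : Equiv.Perm (Fin m),
        (G - antiPerm n m l r G) ∈ C := by
      refine hsum _ (fun l => hsum _ (fun r => ?_))
      exact hI ⟨G, l, r, hG, rfl⟩
    have hc : (0:ℝ) ≤ ((m.factorial : ℝ)^2)⁻¹ := by positivity
    have := hSMul _ hc _ hmem
    rw [sum_sub_antiPerm, smul_smul] at this
    have hfac : ((((m.factorial : ℝ)^2)⁻¹ : ℝ) : ℂ) * ((m.factorial : ℂ)^2) = 1 := by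
      push_cast
      exact inv_mul_cancel₀ (pow_ne_zero _ (Nat.cast_ne_zero.mpr m.factorial_ne_zero))
    rwa [hfac, one_smul] at this
  · intro hV A hA
    obtain ⟨G, l, r, hG, rfl⟩ := hA
    refine hV ⟨G - antiPerm n m l r G, hG.sub (antiPerm_isHermitian l r hG), ?_⟩
    have hz : antisymmetriser n m * (G - antiPerm n m l r G) * antisymmetriser n m = 0 := by
      rw [mul_sub, sub_mul, anti_antiPerm_anti, sub_self]
    rw [hz, sub_zero]
end

section
/- Let ρ be an N×N density matrix. Then the following are equivalent: (1) for all permutations π_l, π_r ∈ S_m, ρ = sign(π_l)·sign(π_r)·(1/2)(P_{π_r} ρ P_{π_l}† + P_{π_l} ρ P_{π_r}†); (2) ρ = Π_Anti ρ Π_Anti. -/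
open Matrix ComplexOrder

/-!
The antisymmetriser `A` is the sign-isotypic projector of the permutation representation,
so `P_σ A = sign σ • A = A P_σ` and `A * A = A`. If `ρ = A ρ A`, these give
`P_σ ρ P_τ† = sign σ sign τ • ρ`, and (1) follows since signs square to `1`. Conversely,
taking `π_l = 1` in (1) and averaging over `π_r` gives `ρ = (A ρ + ρ A) / 2`; multiplying
this by the idempotent `A` on the left and on the right shows `A ρ = A ρ A = ρ A`,
hence `ρ = A ρ A`.
-/

section TwistedAverage

variable {G K R : Type*} [Group G] [Fintype G] [Field K] [Ring R] [Algebra K R]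

/-- The image under `P` of the central idempotent `|G|⁻¹ Σ_g χ(g⁻¹) g` of the group algebra
attached to the character `χ`. -/
noncomputable def twistedAverage (χ : G →* K) (P : G →* R) : R :=
  (Fintype.card G : K)⁻¹ • ∑ g, χ g⁻¹ • P g

variable (χ : G →* K) (P : G →* R)

theorem mul_twistedAverage (g : G) :
    P g * twistedAverage χ P = χ g • twistedAverage χ P := by
  have hsum : P g * ∑ h, χ h⁻¹ • P h = χ g • ∑ h, χ h⁻¹ • P h := by
    rw [Finset.mul_sum, Finset.smul_sum]
    refine Fintype.sum_equiv (Equiv.mulLeft g) _ _ fun h => ?_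
    rw [Equiv.coe_mulLeft, map_mul, mul_smul_comm, smul_smul, _root_.mul_inv_rev, map_mul,
      mul_left_comm, ← map_mul χ g, mul_inv_cancel, map_one, mul_one]
  rw [twistedAverage, mul_smul_comm, hsum, smul_comm]

theorem twistedAverage_mul (g : G) :
    twistedAverage χ P * P g = χ g • twistedAverage χ P := by
  have hsum : (∑ h, χ h⁻¹ • P h) * P g = χ g • ∑ h, χ h⁻¹ • P h := by
    rw [Finset.sum_mul, Finset.smul_sum]
    refine Fintype.sum_equiv (Equiv.mulRight g) _ _ fun h => ?_
    rw [Equiv.coe_mulRight, map_mul, smul_mul_assoc, smul_smul, _root_.mul_inv_rev, map_mul,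
      ← mul_assoc, ← map_mul χ g, mul_inv_cancel, map_one, one_mul]
  rw [twistedAverage, smul_mul_assoc, hsum, smul_comm]

variable [NeZero (Fintype.card G : K)]

theorem sum_smul_eq_card_smul_twistedAverage :
    ∑ g, χ g⁻¹ • P g = (Fintype.card G : K) • twistedAverage χ P :=
  (smul_inv_smul₀ (NeZero.ne _) _).symm

theorem isIdempotentElem_twistedAverage : IsIdempotentElem (twistedAverage χ P) := by
  have hterm (g : G) : χ g⁻¹ • (P g * twistedAverage χ P) = twistedAverage χ P := by
    rw [mul_twistedAverage, smul_smul, ← map_mul, inv_mul_cancel, map_one, one_smul]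
  unfold IsIdempotentElem
  conv_lhs => arg 1; rw [twistedAverage]
  simp_rw [smul_mul_assoc, Finset.sum_mul, smul_mul_assoc, hterm, Finset.sum_const,
    Finset.card_univ, ← Nat.cast_smul_eq_nsmul K, inv_smul_smul₀ (NeZero.ne _)]

end TwistedAverage

theorem IsIdempotentElem.eq_mul_mul_of_eq_half_smul {K R : Type*} [Field K] [NeZero (2 : K)]
    [Ring R] [Algebra K R] {a x : R} (ha : IsIdempotentElem a)
    (h : x = (2 : K)⁻¹ • (a * x + x * a)) : x = a * x * a := by
  have hx : x + x = a * x + x * a := by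
    conv_lhs => rw [← two_smul K, h, smul_inv_smul₀ (NeZero.ne _)]
  have hleft : a * x = a * x * a := by
    have := congrArg (a * ·) hx
    simp only [mul_add, ← mul_assoc, ha.eq] at this
    exact add_left_cancel this
  have hright : x * a = a * x * a := by
    have := congrArg (· * a) hx
    simp only [add_mul, mul_assoc, ha.eq] at this
    rw [← mul_assoc] at this
    exact add_right_cancel this
  rw [hleft, hright, ← two_smul K, ← two_smul K] at hx
  exact smul_right_injective R (NeZero.ne (2 : K)) hx

theorem Int.cast_units_mul_self {R : Type*} [Ring R] (u : ℤˣ) :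
    ((u : ℤ) : R) * ((u : ℤ) : R) = 1 := by
  rw [← Int.cast_mul, ← Units.val_mul, Int.units_mul_self, Units.val_one, Int.cast_one]

@[simps]
def coordPermHom (n m : ℕ) : Equiv.Perm (Fin m) →* Equiv.Perm (Fin m → Fin n) where
  toFun π := π.arrowCongr (Equiv.refl _)
  map_one' := Equiv.arrowCongr_refl
  map_mul' _ _ := rfl

theorem permMat_eq_permMatrix (n m : ℕ) (π : Equiv.Perm (Fin m)) :
    permMat n m π = (coordPermHom n m π).permMatrix ℂ := by
  ext f g
  simp only [permMat, of_apply, coordPermHom_apply, PEquiv.toMatrix_apply, Equiv.toPEquiv_apply,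
    Option.mem_def, Option.some.injEq, eq_comm]
  rfl

/-- `permMat n m` is an anti-homomorphism (`P_π P_σ = P_{σπ}`), so the representation is
`π ↦ P_{π⁻¹}`. -/
noncomputable def permMatHom (n m : ℕ) :
    Equiv.Perm (Fin m) →* Matrix (Fin m → Fin n) (Fin m → Fin n) ℂ :=
  Matrix.permMatrixHom.comp (coordPermHom n m)

theorem permMat_eq_permMatHom_inv (n m : ℕ) (π : Equiv.Perm (Fin m)) :
    permMat n m π = permMatHom n m π⁻¹ := by
  rw [permMatHom, MonoidHom.comp_apply, Matrix.permMatrixHom_apply, map_inv, inv_inv,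
    permMat_eq_permMatrix]

theorem conjTranspose_permMat (n m : ℕ) (π : Equiv.Perm (Fin m)) :
    (permMat n m π)ᴴ = permMatHom n m π := by
  simp [permMat_eq_permMatrix, permMatHom]

noncomputable def signChar (m : ℕ) : Equiv.Perm (Fin m) →* ℂ :=
  (Int.castRingHom ℂ : ℤ →* ℂ).comp ((Units.coeHom ℤ).comp Equiv.Perm.sign)

@[simp]
theorem signChar_apply (m : ℕ) (π : Equiv.Perm (Fin m)) :
    signChar m π = ((Equiv.Perm.sign π : ℤ) : ℂ) :=
  rfl

theorem antisymmetriser_eq_twistedAverage (n m : ℕ) :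
    antisymmetriser n m = twistedAverage (signChar m) (permMatHom n m) := by
  rw [antisymmetriser, twistedAverage, Fintype.card_perm, Fintype.card_fin]
  congr 1
  exact Fintype.sum_equiv (Equiv.inv _) _ _ fun π => by simp [permMat_eq_permMatHom_inv]

theorem permMat_mul_antisymmetriser (n m : ℕ) (σ : Equiv.Perm (Fin m)) :
    permMat n m σ * antisymmetriser n m =
      ((Equiv.Perm.sign σ : ℤ) : ℂ) • antisymmetriser n m := by
  simp [permMat_eq_permMatHom_inv, antisymmetriser_eq_twistedAverage, mul_twistedAverage]

theorem antisymmetriser_mul_permMat (n m : ℕ) (σ : Equiv.Perm (Fin m)) :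
    antisymmetriser n m * permMat n m σ =
      ((Equiv.Perm.sign σ : ℤ) : ℂ) • antisymmetriser n m := by
  simp [permMat_eq_permMatHom_inv, antisymmetriser_eq_twistedAverage, twistedAverage_mul]

theorem isIdempotentElem_antisymmetriser (n m : ℕ) :
    IsIdempotentElem (antisymmetriser n m) := by
  rw [antisymmetriser_eq_twistedAverage]
  exact isIdempotentElem_twistedAverage _ _

theorem sum_sign_smul_permMat (n m : ℕ) :
    ∑ π : Equiv.Perm (Fin m), ((Equiv.Perm.sign π : ℤ) : ℂ) • permMat n m π =
      (m.factorial : ℂ) • antisymmetriser n m :=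
  (smul_inv_smul₀ (Nat.cast_ne_zero.mpr m.factorial_ne_zero) _).symm

theorem sum_sign_smul_conjTranspose_permMat (n m : ℕ) :
    ∑ π : Equiv.Perm (Fin m), ((Equiv.Perm.sign π : ℤ) : ℂ) • (permMat n m π)ᴴ =
      (m.factorial : ℂ) • antisymmetriser n m := by
  have := sum_smul_eq_card_smul_twistedAverage (signChar m) (permMatHom n m)
  simpa [conjTranspose_permMat, ← antisymmetriser_eq_twistedAverage, Fintype.card_perm]
    using this
theorem eq_half_smul_antisymmetriser_mul_add (n m : ℕ)
    (ρ : Matrix (Fin m → Fin n) (Fin m → Fin n) ℂ)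
    (h : ∀ π : Equiv.Perm (Fin m), ρ = ((Equiv.Perm.sign π : ℤ) : ℂ) •
      ((2 : ℂ)⁻¹ • (permMat n m π * ρ + ρ * (permMat n m π)ᴴ))) :
    ρ = (2 : ℂ)⁻¹ • (antisymmetriser n m * ρ + ρ * antisymmetriser n m) := by
  set A := antisymmetriser n m
  have hsum : (m.factorial : ℂ) • ρ = (m.factorial : ℂ) • ((2 : ℂ)⁻¹ • (A * ρ + ρ * A)) :=
    calc (m.factorial : ℂ) • ρ = ∑ _π : Equiv.Perm (Fin m), ρ := by
          simp [Fintype.card_perm, Nat.cast_smul_eq_nsmul]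
      _ = ∑ π : Equiv.Perm (Fin m), ((Equiv.Perm.sign π : ℤ) : ℂ) •
            ((2 : ℂ)⁻¹ • (permMat n m π * ρ + ρ * (permMat n m π)ᴴ)) :=
          Finset.sum_congr rfl fun π _ => h π
      _ = (2 : ℂ)⁻¹ •
            ((∑ π : Equiv.Perm (Fin m), ((Equiv.Perm.sign π : ℤ) : ℂ) • permMat n m π) * ρ +
              ρ * ∑ π : Equiv.Perm (Fin m), ((Equiv.Perm.sign π : ℤ) : ℂ) • (permMat n m π)ᴴ) := by
          simp only [Finset.sum_mul, Finset.mul_sum, Finset.smul_sum, smul_add,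
            Finset.sum_add_distrib, smul_mul_assoc, mul_smul_comm, smul_comm _ (2 : ℂ)⁻¹]
      _ = (m.factorial : ℂ) • ((2 : ℂ)⁻¹ • (A * ρ + ρ * A)) := by
          rw [sum_sign_smul_permMat, sum_sign_smul_conjTranspose_permMat, smul_mul_assoc,
            mul_smul_comm, ← smul_add, smul_comm]
  exact smul_right_injective _ (Nat.cast_ne_zero.mpr m.factorial_ne_zero) hsum

theorem permMat_mul_mul_conjTranspose_permMat (n m : ℕ)
    {ρ : Matrix (Fin m → Fin n) (Fin m → Fin n) ℂ}
    (h : ρ = antisymmetriser n m * ρ * antisymmetriser n m) (σ τ : Equiv.Perm (Fin m)) :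
    permMat n m σ * ρ * (permMat n m τ)ᴴ =
      (((Equiv.Perm.sign σ : ℤ) : ℂ) * ((Equiv.Perm.sign τ : ℤ) : ℂ)) • ρ := by
  rw [conjTranspose_permMat, ← inv_inv τ, ← permMat_eq_permMatHom_inv, h]
  simp only [← mul_assoc, permMat_mul_antisymmetriser, smul_mul_assoc]
  simp only [mul_assoc, antisymmetriser_mul_permMat, mul_smul_comm, smul_smul,
    Equiv.Perm.sign_inv]

theorem density_anti_exchangeable_iff_general (n m : ℕ)
    (ρ : Matrix (Fin m → Fin n) (Fin m → Fin n) ℂ) :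
    (∀ πl πr : Equiv.Perm (Fin m),
        ρ = (((Equiv.Perm.sign πl : ℤ) : ℂ) * ((Equiv.Perm.sign πr : ℤ) : ℂ)) •
          ((2 : ℂ)⁻¹ •
            (permMat n m πr * ρ * (permMat n m πl)ᴴ +
              permMat n m πl * ρ * (permMat n m πr)ᴴ))) ↔
      ρ = antisymmetriser n m * ρ * antisymmetriser n m := by
  constructor
  · intro h
    refine (isIdempotentElem_antisymmetriser n m).eq_mul_mul_of_eq_half_smul (K := ℂ) ?_
    refine eq_half_smul_antisymmetriser_mul_add n m ρ fun π => ?_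
    simpa [permMat_eq_permMatHom_inv] using h 1 π
  · intro h πl πr
    rw [permMat_mul_mul_conjTranspose_permMat n m h, permMat_mul_mul_conjTranspose_permMat n m h,
      ← add_smul, smul_smul, smul_smul]
    conv_lhs => rw [← one_smul ℂ ρ]
    congr 1
    have hl : ((Equiv.Perm.sign πl : ℤ) : ℂ) * ((Equiv.Perm.sign πl : ℤ) : ℂ) = 1 :=
      Int.cast_units_mul_self _
    have hr : ((Equiv.Perm.sign πr : ℤ) : ℂ) * ((Equiv.Perm.sign πr : ℤ) : ℂ) = 1 :=
      Int.cast_units_mul_self _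
    linear_combination -(((Equiv.Perm.sign πr : ℤ) : ℂ) ^ 2 * hl + hr)

/-- A density matrix `ρ` satisfies `ρ = sign(π_l)·sign(π_r)·(1/2)(P_r ρ P_l† + P_l ρ P_r†)`
for all `π_l, π_r ∈ S_m` iff `ρ = Π_Anti ρ Π_Anti`. -/
theorem density_anti_exchangeable_iff (n m : ℕ) (hn : 1 ≤ n) (hm : 1 ≤ m)
    (ρ : Matrix (Fin m → Fin n) (Fin m → Fin n) ℂ)
    (hρ : ρ.PosSemidef) (htr : ρ.trace = 1) :
    (∀ πl πr : Equiv.Perm (Fin m),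
        ρ = (((Equiv.Perm.sign πl : ℤ) : ℂ) * ((Equiv.Perm.sign πr : ℤ) : ℂ)) •
          ((2 : ℂ)⁻¹ •
            (permMat n m πr * ρ * (permMat n m πl)ᴴ +
              permMat n m πl * ρ * (permMat n m πr)ᴴ))) ↔
      ρ = antisymmetriser n m * ρ * antisymmetriser n m :=
  density_anti_exchangeable_iff_general n m ρ
end

section
/- Let 1 ≤ m̌ < m, let N̂ = n^m̌ and M = n^{m−m̌} (so N = N̂·M), and let Π̂ be an N̂×N̂ Hermitian matrix with Π̂² = Π̂ (an orthogonal projection). Let C be a convex cone of N×N Hermitian matrices with I_Anti ⊆ C, and define the conditional set C_Π̂ := {G Hermitian N×N : (Π̂ ⊗ I_M)† G (Π̂ ⊗ I_M) ∈ C}, where ⊗ is the Kronecker product under the identification ℂ^N ≅ ℂ^N̂ ⊗ ℂ^M given by grouping the first m̌ and the last m−m̌ tensor factors. Then for every N×N Hermitian matrix G and all permutations τ_l, τ_r of {1,…,m−m̌}, the matrix G − sign(τ_l)·sign(τ_r)·(1/2)((I_N̂ ⊗ Q_{τ_l})† G (I_N̂ ⊗ Q_{τ_r}) + (I_N̂ ⊗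 Q_{τ_r})† G (I_N̂ ⊗ Q_{τ_l})) belongs to C_Π̂. -/
open Matrix

/-- The identification `ℂ^(n^m) ≅ ℂ^(n^mc) ⊗ ℂ^(n^(m-mc))` given by grouping the first
`mc` and the last `m - mc` tensor factors, at the level of coordinate indices. -/
def splitEquiv (n m mc : ℕ) (h : mc ≤ m) :
    (Fin m → Fin n) ≃ (Fin mc → Fin n) × (Fin (m - mc) → Fin n) :=
  ((Equiv.arrowCongr ((finCongr (Nat.add_sub_cancel' h)).symm.trans finSumFinEquiv.symm)
      (Equiv.refl (Fin n))).trans (Equiv.sumArrowEquivProdArrow _ _ _))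

/-- The Kronecker product `A ⊗ B` of an `n^mc × n^mc` matrix and an
`n^(m-mc) × n^(m-mc)` matrix, viewed as an `n^m × n^m` matrix under `splitEquiv`. -/
def embedKron (n m mc : ℕ) (h : mc ≤ m)
    (A : Matrix (Fin mc → Fin n) (Fin mc → Fin n) ℂ)
    (B : Matrix (Fin (m - mc) → Fin n) (Fin (m - mc) → Fin n) ℂ) :
    Matrix (Fin m → Fin n) (Fin m → Fin n) ℂ :=
  Matrix.reindex (splitEquiv n m mc h).symm (splitEquiv n m mc h).symm
    (Matrix.kroneckerMap (· * ·) A B)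

/-!
Write `P = Π̂ ⊗ I` and `Q_τ' = I ⊗ Q_τ`. Since `P` commutes with every `Q_τ'`, conjugation by `P`
commutes with the antisymmetrisation: `P† (G - A(G)) P = G' - A(G')` with `G' = P† G P` Hermitian.
Moreover `I ⊗ Q_τ` is the permutation matrix `P_π` of the permutation `π` of all `m` factors that
fixes the first `m̌` and acts by `τ` on the rest, and `sign π = sign τ`. Hence `P† (G - A(G)) P` is
of the form `G' - A_{l,r}(G')`, i.e. it lies in `I_Anti ⊆ C`.
-/

section AntiConj

variable {ι : Type*} [Fintype ι]

noncomputable def antiConj (s : ℂ) (Ql Qr G : Matrix ι ι ℂ) : Matrix ι ι ℂ :=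
  s • ((2 : ℂ)⁻¹ • (Qlᴴ * G * Qr + Qrᴴ * G * Ql))

lemma Matrix.IsHermitian.antiConj {G : Matrix ι ι ℂ} (hG : G.IsHermitian) {s : ℂ}
    (hs : star s = s) (Ql Qr : Matrix ι ι ℂ) : (antiConj s Ql Qr G).IsHermitian := by
  simp only [IsHermitian, _root_.antiConj, conjTranspose_smul, conjTranspose_add,
    conjTranspose_mul, conjTranspose_conjTranspose, hG.eq, hs, star_inv₀, star_ofNat,
    Matrix.mul_assoc, add_comm]

lemma conjTranspose_mul_conj_mul_of_commute {P Qa Qb : Matrix ι ι ℂ}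
    (ha : Commute Qa P) (hb : Commute Qb P) (G : Matrix ι ι ℂ) :
    Pᴴ * (Qaᴴ * G * Qb) * P = Qaᴴ * (Pᴴ * G * P) * Qb :=
  calc Pᴴ * (Qaᴴ * G * Qb) * P = (Qa * P)ᴴ * G * (Qb * P) := by
        simp only [conjTranspose_mul, Matrix.mul_assoc]
    _ = (P * Qa)ᴴ * G * (P * Qb) := by rw [ha.eq, hb.eq]
    _ = Qaᴴ * (Pᴴ * G * P) * Qb := by simp only [conjTranspose_mul, Matrix.mul_assoc]

lemma conjTranspose_mul_antiConj_mul_of_commute {P Ql Qr : Matrix ι ι ℂ}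
    (hl : Commute Ql P) (hr : Commute Qr P) (s : ℂ) (G : Matrix ι ι ℂ) :
    Pᴴ * antiConj s Ql Qr G * P = antiConj s Ql Qr (Pᴴ * G * P) := by
  simp only [antiConj, Matrix.mul_smul, Matrix.smul_mul, Matrix.mul_add, Matrix.add_mul,
    conjTranspose_mul_conj_mul_of_commute hl hr, conjTranspose_mul_conj_mul_of_commute hr hl]

end AntiConj

lemma star_sign_mul_sign {α β : Type*} [Fintype α] [DecidableEq α] [Fintype β] [DecidableEq β]
    (σ : Equiv.Perm α) (τ : Equiv.Perm β) :
    star (((Equiv.Perm.sign σ : ℤ) : ℂ) * ((Equiv.Perm.sign τ : ℤ) : ℂ)) =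
      ((Equiv.Perm.sign σ : ℤ) : ℂ) * ((Equiv.Perm.sign τ : ℤ) : ℂ) := by
  simp

lemma antiPerm_eq_antiConj (n m : ℕ) (πl πr : Equiv.Perm (Fin m))
    (G : Matrix (Fin m → Fin n) (Fin m → Fin n) ℂ) :
    antiPerm n m πl πr G =
      antiConj (((Equiv.Perm.sign πl : ℤ) : ℂ) * ((Equiv.Perm.sign πr : ℤ) : ℂ))
        (permMat n m πl) (permMat n m πr) G :=
  rfl

lemma embedKron_mul (n m mc : ℕ) (h : mc ≤ m)
    (A A' : Matrix (Fin mc → Fin n) (Fin mc → Fin n) ℂ)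
    (B B' : Matrix (Fin (m - mc) → Fin n) (Fin (m - mc) → Fin n) ℂ) :
    embedKron n m mc h A B * embedKron n m mc h A' B' = embedKron n m mc h (A * A') (B * B') := by
  simp only [embedKron, reindex_apply, Equiv.symm_symm, submatrix_mul_equiv,
    ← mul_kronecker_mul]

lemma commute_embedKron_one_embedKron_one (n m mc : ℕ) (h : mc ≤ m)
    (A : Matrix (Fin mc → Fin n) (Fin mc → Fin n) ℂ)
    (B : Matrix (Fin (m - mc) → Fin n) (Fin (m - mc) → Fin n) ℂ) :
    Commute (embedKron n m mc h 1 B) (embedKron n m mc h A 1) := by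
  simp only [Commute, SemiconjBy, embedKron_mul, one_mul, mul_one]

def finSplit (m mc : ℕ) (h : mc ≤ m) : Fin m ≃ Fin mc ⊕ Fin (m - mc) :=
  (finCongr (Nat.add_sub_cancel' h)).symm.trans finSumFinEquiv.symm

def extPerm (m mc : ℕ) (h : mc ≤ m) (τ : Equiv.Perm (Fin (m - mc))) : Equiv.Perm (Fin m) :=
  (finSplit m mc h).symm.permCongr (Equiv.Perm.sumCongr 1 τ)

lemma sign_extPerm (m mc : ℕ) (h : mc ≤ m) (τ : Equiv.Perm (Fin (m - mc))) :
    Equiv.Perm.sign (extPerm m mc h τ) = Equiv.Perm.sign τ := by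
  simp [extPerm, Equiv.Perm.sign_permCongr, Equiv.Perm.sign_sumCongr]

lemma splitEquiv_apply (n m mc : ℕ) (h : mc ≤ m) (f : Fin m → Fin n) :
    splitEquiv n m mc h f =
      (fun i => f ((finSplit m mc h).symm (.inl i)), fun j => f ((finSplit m mc h).symm (.inr j))) :=
  rfl

lemma splitEquiv_comp_extPerm (n m mc : ℕ) (h : mc ≤ m) (τ : Equiv.Perm (Fin (m - mc)))
    (f : Fin m → Fin n) :
    splitEquiv n m mc h (f ∘ extPerm m mc h τ) =
      ((splitEquiv n m mc h f).1, (splitEquiv n m mc h f).2 ∘ τ) := by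
  simp [splitEquiv_apply, extPerm, Function.comp_def]

lemma embedKron_one_permMat (n m mc : ℕ) (h : mc ≤ m) (τ : Equiv.Perm (Fin (m - mc))) :
    embedKron n m mc h 1 (permMat n (m - mc) τ) = permMat n m (extPerm m mc h τ) := by
  ext f g
  have key : g ∘ extPerm m mc h τ = f ↔ (splitEquiv n m mc h f).1 = (splitEquiv n m mc h g).1 ∧
      (splitEquiv n m mc h g).2 ∘ τ = (splitEquiv n m mc h f).2 := by
    rw [← (splitEquiv n m mc h).apply_eq_iff_eq, splitEquiv_comp_extPerm, Prod.ext_iff, eq_comm]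
  simp only [embedKron, permMat, reindex_apply, Equiv.symm_symm, submatrix_apply,
    kroneckerMap_apply, of_apply, one_apply, Equiv.eq_comp_symm, key]
  rw [ite_zero_mul_ite_zero, mul_one]

theorem conditional_anti_exchangeable_general (n m mc : ℕ)
    (hlt : mc < m)
    (Proj : Matrix (Fin mc → Fin n) (Fin mc → Fin n) ℂ)
    (C : Set (Matrix (Fin m → Fin n) (Fin m → Fin n) ℂ))
    (hI : IAnti n m ⊆ C)
    (G : Matrix (Fin m → Fin n) (Fin m → Fin n) ℂ) (hG : G.IsHermitian)
    (τl τr : Equiv.Perm (Fin (m - mc))) :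
    G - (((Equiv.Perm.sign τl : ℤ) : ℂ) * ((Equiv.Perm.sign τr : ℤ) : ℂ)) •
        ((2 : ℂ)⁻¹ •
          ((embedKron n m mc hlt.le 1 (permMat n (m - mc) τl))ᴴ * G *
              embedKron n m mc hlt.le 1 (permMat n (m - mc) τr) +
            (embedKron n m mc hlt.le 1 (permMat n (m - mc) τr))ᴴ * G *
              embedKron n m mc hlt.le 1 (permMat n (m - mc) τl))) ∈
      {H : Matrix (Fin m → Fin n) (Fin m → Fin n) ℂ | H.IsHermitian ∧
        (embedKron n m mc hlt.le Proj 1)ᴴ * H * embedKron n m mc hlt.le Proj 1 ∈ C} := by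
  set P := embedKron n m mc hlt.le Proj 1
  set s := ((Equiv.Perm.sign τl : ℤ) : ℂ) * ((Equiv.Perm.sign τr : ℤ) : ℂ)
  set Ql := embedKron n m mc hlt.le 1 (permMat n (m - mc) τl)
  set Qr := embedKron n m mc hlt.le 1 (permMat n (m - mc) τr)
  change G - antiConj s Ql Qr G ∈ {H | H.IsHermitian ∧ Pᴴ * H * P ∈ C}
  refine ⟨hG.sub (hG.antiConj (star_sign_mul_sign τl τr) Ql Qr), hI ?_⟩
  refine ⟨Pᴴ * G * P, extPerm m mc hlt.le τl, extPerm m mc hlt.le τr,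
    isHermitian_conjTranspose_mul_mul P hG, ?_⟩
  rw [Matrix.mul_sub, Matrix.sub_mul, conjTranspose_mul_antiConj_mul_of_commute
      (commute_embedKron_one_embedKron_one ..) (commute_embedKron_one_embedKron_one ..),
    antiPerm_eq_antiConj, sign_extPerm, sign_extPerm, ← embedKron_one_permMat,
    ← embedKron_one_permMat]

/-- Updating preserves antisymmetric exchangeability: if `I_Anti ⊆ C` then the conditional
set `C_Π̂ = {G Hermitian : (Π̂ ⊗ I)† G (Π̂ ⊗ I) ∈ C}` contains
`G - sign(τ_l)·sign(τ_r)·(1/2)((I ⊗ Q_{τ_l})† G (I ⊗ Q_{τ_r}) + (I ⊗ Q_{τ_r})† G (I ⊗ Q_{τ_l}))`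
for every Hermitian `G` and all permutations `τ_l, τ_r` of the last `m - m̌` factors. -/
theorem conditional_anti_exchangeable (n m mc : ℕ) (hn : 1 ≤ n) (hmc : 1 ≤ mc)
    (hlt : mc < m)
    (Proj : Matrix (Fin mc → Fin n) (Fin mc → Fin n) ℂ)
    (hProjHerm : Proj.IsHermitian) (hProjIdem : Proj * Proj = Proj)
    (C : Set (Matrix (Fin m → Fin n) (Fin m → Fin n) ℂ))
    (hHerm : ∀ A ∈ C, A.IsHermitian)
    (hAdd : ∀ A ∈ C, ∀ B ∈ C, A + B ∈ C)
    (hSMul : ∀ (c : ℝ), 0 ≤ c → ∀ A ∈ C, (c : ℂ) • A ∈ C)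
    (hI : IAnti n m ⊆ C)
    (G : Matrix (Fin m → Fin n) (Fin m → Fin n) ℂ) (hG : G.IsHermitian)
    (τl τr : Equiv.Perm (Fin (m - mc))) :
    G - (((Equiv.Perm.sign τl : ℤ) : ℂ) * ((Equiv.Perm.sign τr : ℤ) : ℂ)) •
        ((2 : ℂ)⁻¹ •
          ((embedKron n m mc hlt.le 1 (permMat n (m - mc) τl))ᴴ * G *
              embedKron n m mc hlt.le 1 (permMat n (m - mc) τr) +
            (embedKron n m mc hlt.le 1 (permMat n (m - mc) τr))ᴴ * G *
              embedKron n m mc hlt.le 1 (permMat n (m - mc) τl))) ∈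
      {H : Matrix (Fin m → Fin n) (Fin m → Fin n) ℂ | H.IsHermitian ∧
        (embedKron n m mc hlt.le Proj 1)ᴴ * H * embedKron n m mc hlt.le Proj 1 ∈ C} :=
  conditional_anti_exchangeable_general n m mc hlt Proj C hI G hG τl τr
end
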